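/- arXiv:2501.13016 — 3 statements merged into one kernel-verified Lean document; each statement's English description precedes it below -/
import Mathlib

section
/- Let q ∈ (0,1], let n ≥ 1 and let i, j, k be nonnegative integers with i + j + k = n. Then the triangular q-Bernstein polynomials satisfy the recurrence B^n_{ijk}(u,v) = u·B^{n-1}_{i-1,j,k}(u,v) + v·B^{n-1}_{i,j-1,k}(u,v) + (q^{i+j} − q^{n−1}u − q^{n−1}v)·B^{n-1}_{i,j,k-1}(u,v) for all real u, v, where by convention B^0_{000}(u,v) = 1 and B^m_{ijk}(u,v) = 0 whenever any of the indices i, j, k is negative. -/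
open Finset

/-- The q-integer [r] = 1 + q + ... + q^(r-1). -/
noncomputable def qInt (q : ℝ) (r : ℕ) : ℝ := ∑ s ∈ Finset.range r, q ^ s

/-- The q-factorial [r]!. -/
noncomputable def qFact (q : ℝ) : ℕ → ℝ
  | 0 => 1
  | r + 1 => qInt q (r + 1) * qFact q r

/-- The q-binomial coefficient [i choose j]_q (zero unless i ≥ j ≥ 0). -/
noncomputable def qBinom (q : ℝ) (i j : ℕ) : ℝ :=
  if j ≤ i then qFact q i / (qFact q j * qFact q (i - j)) else 0

/-- The q-binomial coefficient with integer indices, zero unless i ≥ j ≥ 0. -/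
noncomputable def qBinomZ (q : ℝ) (i j : ℤ) : ℝ :=
  if 0 ≤ j ∧ j ≤ i then qFact q i.toNat / (qFact q j.toNat * qFact q (i - j).toNat) else 0

/-- The triangular q-Bernstein polynomial B^n_{ijk}(u,v)
    (meaningful for i + j + k = n). -/
noncomputable def triB (q : ℝ) (n i j k : ℕ) (u v : ℝ) : ℝ :=
  qBinom q n k * (Nat.choose (i + j) i : ℝ) * u ^ i * v ^ j *
    ∏ s ∈ Finset.range k, (1 - q ^ s * u - q ^ s * v)

/-- The triangular q-Bernstein polynomial with integer indices; by convention it is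
    zero whenever any of the indices is negative. -/
noncomputable def triBZ (q : ℝ) (n : ℕ) (i j k : ℤ) (u v : ℝ) : ℝ :=
  if 0 ≤ i ∧ 0 ≤ j ∧ 0 ≤ k then triB q n i.toNat j.toNat k.toNat u v else 0

/-- The classical triangular Bernstein polynomial b^n_{ijk}(u,v). -/
noncomputable def triBern (n i j k : ℕ) (u v : ℝ) : ℝ :=
  (Nat.factorial n : ℝ) /
      ((Nat.factorial i : ℝ) * (Nat.factorial j : ℝ) * (Nat.factorial k : ℝ)) *
    u ^ i * v ^ j * (1 - u - v) ^ k

/-- The set of triples (i, j, k) of nonnegative integers with i + j + k = n. -/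
def simplex (n : ℕ) : Finset (ℕ × ℕ × ℕ) :=
  (Finset.range (n + 1) ×ˢ Finset.range (n + 1) ×ˢ Finset.range (n + 1)).filter
    (fun p => p.1 + p.2.1 + p.2.2 = n)

/-! Write `B^n_{ijk} = [n choose k] · C(i+j, i) u^i v^j · ∏_{s<k} (1 - q^s u - q^s v)`. The `u`- and
`v`-terms of the recurrence merge by the ordinary Pascal rule into `[n-1 choose k] · C(i+j, i) u^i v^j`
times the product of length `k`. On the left, the q-Pascal rule
`[n choose k] = [n-1 choose k] + q^(n-k) [n-1 choose k-1]` splits `B^n_{ijk}` into that same term plus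
`q^(i+j) [n-1 choose k-1]` times the product, whose last factor `1 - q^(k-1) (u + v)` turns it into the
third term because `q^(i+j) q^(k-1) = q^(n-1)`. -/

lemma qInt_pos {q : ℝ} (hq : 0 < q) {r : ℕ} (hr : 0 < r) : 0 < qInt q r :=
  Finset.sum_pos (fun s _ => pow_pos hq s) (Finset.nonempty_range_iff.mpr hr.ne')

lemma qFact_pos {q : ℝ} (hq : 0 < q) (r : ℕ) : 0 < qFact q r := by
  induction r with
  | zero => exact one_pos
  | succ r ih => exact mul_pos (qInt_pos hq r.succ_pos) ih

lemma qInt_add (q : ℝ) (a b : ℕ) : qInt q (a + b) = qInt q a + q ^ a * qInt q b := by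
  simp [qInt, Finset.sum_range_add, Finset.mul_sum, pow_add]

lemma qBinom_add_left (q : ℝ) (k l : ℕ) :
    qBinom q (k + l) k = qFact q (k + l) / (qFact q k * qFact q l) := by
  simp [qBinom]

lemma qBinom_of_lt {q : ℝ} {n k : ℕ} (h : n < k) : qBinom q n k = 0 :=
  if_neg h.not_ge

lemma qBinom_zero_right {q : ℝ} (hq : 0 < q) (n : ℕ) : qBinom q n 0 = 1 := by
  simp [qBinom, qFact, (qFact_pos hq n).ne']

lemma qBinom_self {q : ℝ} (hq : 0 < q) (n : ℕ) : qBinom q n n = 1 := by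
  simp [qBinom, qFact, (qFact_pos hq n).ne']

lemma qBinom_succ_succ {q : ℝ} (hq : 0 < q) (l k : ℕ) :
    qBinom q (l + k + 1) (k + 1) = qBinom q (l + k) (k + 1) + q ^ l * qBinom q (l + k) k := by
  rcases l with _ | l
  · simp [qBinom_of_lt, qBinom_self hq]
  · rw [show l + 1 + k + 1 = (k + 1) + (l + 1) by omega, show l + 1 + k = (k + 1) + l by omega,
      qBinom_add_left, qBinom_add_left, show (k + 1) + l = k + (l + 1) by omega, qBinom_add_left,
      show k + (l + 1) = k + 1 + l by omega]
    have hsplit : qInt q (k + 1 + (l + 1)) = qInt q (l + 1) + q ^ (l + 1) * qInt q (k + 1) := by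
      rw [add_comm, qInt_add]
    rw [show qFact q (k + 1 + (l + 1)) = qInt q (k + 1 + (l + 1)) * qFact q (k + 1 + l) from rfl,
      show qFact q (k + 1) = qInt q (k + 1) * qFact q k from rfl,
      show qFact q (l + 1) = qInt q (l + 1) * qFact q l from rfl, hsplit]
    have := (qInt_pos hq k.add_one_pos).ne'
    have := (qInt_pos hq l.add_one_pos).ne'
    have := (qFact_pos hq k).ne'
    have := (qFact_pos hq l).ne'
    field_simp

lemma natCast_add_one_sub_one (i : ℕ) : ((i + 1 : ℕ) : ℤ) - 1 = i := by
  omega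

lemma triBZ_natCast (q : ℝ) (n i j k : ℕ) (u v : ℝ) :
    triBZ q n i j k u v = triB q n i j k u v := by
  simp [triBZ]

lemma triBZ_neg_one_left (q : ℝ) (n : ℕ) (j k : ℤ) (u v : ℝ) : triBZ q n (-1) j k u v = 0 := by
  simp [triBZ]

lemma triBZ_neg_one_mid (q : ℝ) (n : ℕ) (i k : ℤ) (u v : ℝ) : triBZ q n i (-1) k u v = 0 := by
  simp [triBZ]

lemma triBZ_neg_one_right (q : ℝ) (n : ℕ) (i j : ℤ) (u v : ℝ) : triBZ q n i j (-1) u v = 0 := by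
  simp [triBZ]

lemma triB_zero_right {q : ℝ} (hq : 0 < q) (n i j : ℕ) (u v : ℝ) :
    triB q n i j 0 u v = (i + j).choose i * u ^ i * v ^ j := by
  simp [triB, qBinom_zero_right hq]

lemma triB_succ_right {q : ℝ} (hq : 0 < q) (i j k : ℕ) (u v : ℝ) :
    triB q (i + j + k + 1) i j (k + 1) u v =
      triB q (i + j + k) i j (k + 1) u v +
        (q ^ (i + j) - q ^ (i + j + k) * u - q ^ (i + j + k) * v) * triB q (i + j + k) i j k u v := by
  simp only [triB, qBinom_succ_succ hq, Finset.prod_range_succ, pow_add]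
  ring

lemma mul_triBZ_sub_one_add_mul_triBZ_sub_one {q : ℝ} {m i j k : ℕ} (h : i + j + k = m + 1)
    (u v : ℝ) :
    u * triBZ q m ((i : ℤ) - 1) j k u v + v * triBZ q m i ((j : ℤ) - 1) k u v =
      triB q m i j k u v := by
  rcases i with _ | i <;> rcases j with _ | j
  · simp [triBZ_neg_one_left, triBZ_neg_one_mid, triB, qBinom_of_lt (show m < k by omega)]
  all_goals
    simp only [natCast_add_one_sub_one, triBZ_natCast]
    simp only [Nat.cast_zero, zero_sub, triBZ_neg_one_left, triBZ_neg_one_mid, mul_zero, add_zero,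
      zero_add, triB]
  · rw [Nat.choose_zero_right, Nat.choose_zero_right]
    ring
  · rw [Nat.choose_self, Nat.choose_self]
    ring
  · rw [show i + 1 + (j + 1) = i + (j + 1) + 1 by omega, Nat.choose_succ_succ',
      show i + 1 + j = i + (j + 1) by omega]
    push_cast
    ring

theorem stmt0_general (q : ℝ) (hq0 : 0 < q) (n : ℕ) (hn : 1 ≤ n)
    (i j k : ℕ) (hijk : i + j + k = n) (u v : ℝ) :
    triB q n i j k u v =
      u * triBZ q (n - 1) ((i : ℤ) - 1) (j : ℤ) (k : ℤ) u v +
      v * triBZ q (n - 1) (i : ℤ) ((j : ℤ) - 1) (k : ℤ) u v +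
      (q ^ (i + j) - q ^ (n - 1) * u - q ^ (n - 1) * v) *
        triBZ q (n - 1) (i : ℤ) (j : ℤ) ((k : ℤ) - 1) u v := by
  obtain ⟨m, rfl⟩ : ∃ m, n = m + 1 := ⟨n - 1, by omega⟩
  rw [Nat.add_sub_cancel, mul_triBZ_sub_one_add_mul_triBZ_sub_one hijk]
  rcases k with _ | k
  · simp only [Nat.cast_zero, zero_sub, triBZ_neg_one_right, mul_zero, add_zero,
      triB_zero_right hq0]
  · obtain rfl : m = i + j + k := by omega
    rw [natCast_add_one_sub_one, triBZ_natCast]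
    exact triB_succ_right hq0 i j k u v

/-- recurrence for the triangular q-Bernstein polynomials. -/
theorem stmt0 (q : ℝ) (hq0 : 0 < q) (hq1 : q ≤ 1) (n : ℕ) (hn : 1 ≤ n)
    (i j k : ℕ) (hijk : i + j + k = n) (u v : ℝ) :
    triB q n i j k u v =
      u * triBZ q (n - 1) ((i : ℤ) - 1) (j : ℤ) (k : ℤ) u v +
      v * triBZ q (n - 1) (i : ℤ) ((j : ℤ) - 1) (k : ℤ) u v +
      (q ^ (i + j) - q ^ (n - 1) * u - q ^ (n - 1) * v) *
        triBZ q (n - 1) (i : ℤ) (j : ℤ) ((k : ℤ) - 1) u v :=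
  stmt0_general q hq0 n hn i j k hijk u v
end

section
/- Let q ∈ (0,1] and let n be a nonnegative integer. Every monomial u^α v^β with nonnegative integers α, β satisfying α + β ≤ n lies in the real linear span of the triangular q-Bernstein polynomials {B^n_{ijk}(u,v) : i, j, k ≥ 0, i + j + k = n}. -/
/-!
Up to the positive constant `[n choose k]_q C(a+b, a)`, `B^n_{a,b,k}` is
`P_k(a,b) = u^a v^b ∏_{s<k} (1 - q^s u - q^s v)` with `a + b + k = n`. Expanding the last factor
gives `P_k(a,b) = P_{k+1}(a,b) + q^k (P_k(a+1,b) + P_k(a,b+1))`, whose right-hand side has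
`a + b + k` one larger, so downward induction on `a + b + k` puts every `P_k(a,b)` with
`a + b + k ≤ n` in the span; the monomial `u^α v^β` is `P_0(α,β)`.
-/

open Finset

/-- `triB` stripped of its constant factor `[n choose k]_q * C(a + b, a)`. -/
noncomputable def triBUnscaled (q : ℝ) (k a b : ℕ) : ℝ × ℝ → ℝ :=
  fun uv => uv.1 ^ a * uv.2 ^ b * ∏ s ∈ range k, (1 - q ^ s * uv.1 - q ^ s * uv.2)

noncomputable abbrev triBSpan (q : ℝ) (n : ℕ) : Submodule ℝ (ℝ × ℝ → ℝ) :=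
  Submodule.span ℝ (Set.range (fun p : simplex n => fun uv : ℝ × ℝ =>
    triB q n p.1.1 p.1.2.1 p.1.2.2 uv.1 uv.2))

lemma qBinom_pos {q : ℝ} (hq : 0 < q) {n k : ℕ} (h : k ≤ n) : 0 < qBinom q n k := by
  rw [qBinom, if_pos h]
  exact div_pos (qFact_pos hq n) (mul_pos (qFact_pos hq k) (qFact_pos hq (n - k)))

lemma triBUnscaled_zero (q : ℝ) (a b : ℕ) :
    triBUnscaled q 0 a b = fun uv => uv.1 ^ a * uv.2 ^ b := by
  funext uv
  simp [triBUnscaled]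

lemma triBUnscaled_eq_succ_add (q : ℝ) (k a b : ℕ) :
    triBUnscaled q k a b = triBUnscaled q (k + 1) a b +
      q ^ k • (triBUnscaled q k (a + 1) b + triBUnscaled q k a (b + 1)) := by
  funext uv
  simp only [triBUnscaled, prod_range_succ, Pi.add_apply, Pi.smul_apply, smul_eq_mul]
  ring

lemma triB_eq_smul_triBUnscaled (q : ℝ) (n a b k : ℕ) :
    (fun uv : ℝ × ℝ => triB q n a b k uv.1 uv.2) =
      (qBinom q n k * (a + b).choose a) • triBUnscaled q k a b := by
  funext uv
  simp only [triB, triBUnscaled, Pi.smul_apply, smul_eq_mul]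
  ring

lemma triBUnscaled_mem_triBSpan {q : ℝ} (hq : 0 < q) {n k a b : ℕ} (h : a + b + k = n) :
    triBUnscaled q k a b ∈ triBSpan q n := by
  have hc : qBinom q n k * ((a + b).choose a : ℝ) ≠ 0 :=
    (mul_pos (qBinom_pos hq (by omega)) (by exact_mod_cast Nat.choose_pos (by omega))).ne'
  have hB : (fun uv : ℝ × ℝ => triB q n a b k uv.1 uv.2) ∈ triBSpan q n :=
    Submodule.subset_span ⟨⟨(a, b, k), 
      by simp only [simplex, mem_filter, mem_product, mem_range]; omega⟩, rfl⟩
  rw [triB_eq_smul_triBUnscaled] at hB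
  exact (Submodule.smul_mem_iff _ hc).mp hB

lemma triBUnscaled_mem_triBSpan_of_le {q : ℝ} (hq : 0 < q) {n k a b : ℕ} (h : a + b + k ≤ n) :
    triBUnscaled q k a b ∈ triBSpan q n := by
  obtain ⟨j, hj⟩ := Nat.exists_eq_add_of_le h
  induction j generalizing k a b with
  | zero => exact triBUnscaled_mem_triBSpan hq hj.symm
  | succ j ih =>
    rw [triBUnscaled_eq_succ_add]
    exact add_mem (ih (by omega) (by omega)) (Submodule.smul_mem _ _
      (add_mem (ih (by omega) (by omega)) (ih (by omega) (by omega))))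

theorem stmt8_general (q : ℝ) (hq0 : 0 < q) (n : ℕ)
    (α β : ℕ) (hαβ : α + β ≤ n) :
    (fun uv : ℝ × ℝ => uv.1 ^ α * uv.2 ^ β) ∈
      Submodule.span ℝ
        (Set.range (fun p : simplex n => fun uv : ℝ × ℝ =>
          triB q n p.1.1 p.1.2.1 p.1.2.2 uv.1 uv.2)) := by
  rw [← triBUnscaled_zero q]
  exact triBUnscaled_mem_triBSpan_of_le hq0 hαβ

/-- every monomial of total degree ≤ n lies in the span of the triangular
    q-Bernstein polynomials of degree n. -/
theorem stmt8 (q : ℝ) (hq0 : 0 < q) (hq1 : q ≤ 1) (n : ℕ)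
    (α β : ℕ) (hαβ : α + β ≤ n) :
    (fun uv : ℝ × ℝ => uv.1 ^ α * uv.2 ^ β) ∈
      Submodule.span ℝ
        (Set.range (fun p : simplex n => fun uv : ℝ × ℝ =>
          triB q n p.1.1 p.1.2.1 p.1.2.2 uv.1 uv.2)) :=
  stmt8_general q hq0 n α β hαβ
end

section
/- Let 0 < q < 1 and let r ≥ 1 be an integer. Then there exist nonnegative real numbers c^r_{ijk} ≥ 0, indexed by nonnegative integers i, j, k with i + j + k = r, such that for all real u, v: ∏_{s=0}^{r−1} (1 − q^s u − q^s v) = Σ_{i+j+k=r} c^r_{ijk} · u^i v^j (1 − u − v)^k. -/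
open Finset

/-! Since `0 < q < 1`, each factor `1 - q^s u - q^s v = (1 - q^s) u + (1 - q^s) v + (1 - u - v)`
is a nonnegative combination of the barycentric coordinates `u`, `v`, `1 - u - v`. Functions with a
nonnegative expansion in the degree-`n` barycentric monomials `u^i v^j (1 - u - v)^k` form a cone,
and the product of such expansions of degrees `m` and `n` is one of degree `m + n`. -/

lemma mem_simplex {n : ℕ} {p : ℕ × ℕ × ℕ} :
    p ∈ simplex n ↔ p.1 + p.2.1 + p.2.2 = n := by
  simp only [simplex, mem_filter, mem_product, mem_range]
  omega

lemma simplex_zero : simplex 0 = {(0, 0, 0)} := by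
  ext p
  simp only [mem_simplex, mem_singleton, Prod.ext_iff]
  omega

lemma tsub_mem_simplex {m n : ℕ} {p d : ℕ × ℕ × ℕ} (hp : p ∈ simplex (n + m))
    (hd : d ∈ simplex m) (hdp : d ≤ p) : p - d ∈ simplex n := by
  rw [mem_simplex] at *
  simp only [Prod.le_def] at hdp
  simp only [Prod.fst_sub, Prod.snd_sub]
  omega

lemma map_addRight_simplex {m n : ℕ} {d : ℕ × ℕ × ℕ} (hd : d ∈ simplex m) :
    (simplex n).map (addRightEmbedding d) = (simplex (n + m)).filter (d ≤ ·) := by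
  ext p
  simp only [mem_map, mem_filter, addRightEmbedding_apply]
  constructor
  · rintro ⟨p, hp, rfl⟩
    rw [mem_simplex] at *
    simp only [Prod.fst_add, Prod.snd_add]
    exact ⟨by omega, le_add_self⟩
  · rintro ⟨hp, hdp⟩
    exact ⟨p - d, tsub_mem_simplex hp hd hdp, tsub_add_cancel_of_le hdp⟩

lemma sum_simplex_add {M : Type*} [AddCommMonoid M] {m n : ℕ} {d : ℕ × ℕ × ℕ}
    (hd : d ∈ simplex m) (G : ℕ × ℕ × ℕ → M) (hG : ∀ p, ¬ d ≤ p → G p = 0) :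
    ∑ p ∈ simplex n, G (p + d) = ∑ p ∈ simplex (n + m), G p := by
  calc ∑ p ∈ simplex n, G (p + d)
      = ∑ p ∈ (simplex n).map (addRightEmbedding d), G p := by rw [sum_map]; rfl
    _ = ∑ p ∈ simplex (n + m), G p := by
      rw [map_addRight_simplex hd, sum_filter_of_ne]
      exact fun p _ hGp => by_contra fun hdp => hGp (hG p hdp)

def baryMonomial (p : ℕ × ℕ × ℕ) (u v : ℝ) : ℝ :=
  u ^ p.1 * v ^ p.2.1 * (1 - u - v) ^ p.2.2

lemma baryMonomial_add (p d : ℕ × ℕ × ℕ) (u v : ℝ) :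
    baryMonomial (p + d) u v = baryMonomial d u v * baryMonomial p u v := by
  simp only [baryMonomial, Prod.fst_add, Prod.snd_add, pow_add]
  ring

def HasNonnegBaryExpansion (n : ℕ) (f : ℝ → ℝ → ℝ) : Prop :=
  ∃ c : ℕ × ℕ × ℕ → ℝ, (∀ p ∈ simplex n, 0 ≤ c p) ∧
    ∀ u v, f u v = ∑ p ∈ simplex n, c p * baryMonomial p u v

namespace HasNonnegBaryExpansion

variable {m n : ℕ} {f g : ℝ → ℝ → ℝ}

lemma zero : HasNonnegBaryExpansion n 0 :=
  ⟨0, fun _ _ => le_rfl, fun _ _ => by simp⟩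

lemma one : HasNonnegBaryExpansion 0 1 :=
  ⟨1, fun _ _ => zero_le_one, fun _ _ => by simp [simplex_zero, baryMonomial]⟩

lemma add (hf : HasNonnegBaryExpansion n f) (hg : HasNonnegBaryExpansion n g) :
    HasNonnegBaryExpansion n (f + g) := by
  obtain ⟨c, hc, hfc⟩ := hf
  obtain ⟨d, hd, hgd⟩ := hg
  refine ⟨c + d, fun p hp => add_nonneg (hc p hp) (hd p hp), fun u v => ?_⟩
  simp only [Pi.add_apply, hfc, hgd, add_mul, sum_add_distrib]

lemma smul {a : ℝ} (ha : 0 ≤ a) (hf : HasNonnegBaryExpansion n f) :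
    HasNonnegBaryExpansion n (a • f) := by
  obtain ⟨c, hc, hfc⟩ := hf
  refine ⟨a • c, fun p hp => mul_nonneg ha (hc p hp), fun u v => ?_⟩
  simp only [Pi.smul_apply, smul_eq_mul, hfc, mul_sum, mul_assoc]

lemma sum {ι : Type*} {s : Finset ι} {f : ι → ℝ → ℝ → ℝ}
    (hf : ∀ i ∈ s, HasNonnegBaryExpansion n (f i)) :
    HasNonnegBaryExpansion n (∑ i ∈ s, f i) :=
  sum_induction f _ (fun _ _ => add) zero hf

lemma baryMonomial_mul {d : ℕ × ℕ × ℕ} (hd : d ∈ simplex m)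
    (hf : HasNonnegBaryExpansion n f) :
    HasNonnegBaryExpansion (n + m) (fun u v => baryMonomial d u v * f u v) := by
  obtain ⟨c, hc, hfc⟩ := hf
  refine ⟨fun p => if d ≤ p then c (p - d) else 0, fun p hp => ?_, fun u v => ?_⟩
  · dsimp only
    split_ifs with hdp
    · exact hc _ (tsub_mem_simplex hp hd hdp)
    · exact le_rfl
  · dsimp only
    rw [hfc, mul_sum, ← sum_simplex_add hd _ fun p hdp => by simp [hdp]]
    refine sum_congr rfl fun p _ => ?_
    simp only [le_add_self, if_true, add_tsub_cancel_right, baryMonomial_add]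
    ring

lemma monomial (d : ℕ × ℕ × ℕ) (hd : d ∈ simplex m) :
    HasNonnegBaryExpansion m (baryMonomial d) := by
  simpa using one.baryMonomial_mul hd

lemma mul (hf : HasNonnegBaryExpansion m f) (hg : HasNonnegBaryExpansion n g) :
    HasNonnegBaryExpansion (n + m) (f * g) := by
  obtain ⟨c, hc, hfc⟩ := hf
  have hterm : ∀ p ∈ simplex m,
      HasNonnegBaryExpansion (n + m) (c p • fun u v => baryMonomial p u v * g u v) :=
    fun p hp => smul (hc p hp) (hg.baryMonomial_mul hp)
  convert sum hterm using 1
  ext u v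
  simp only [Pi.mul_apply, hfc, sum_mul, Finset.sum_apply, Pi.smul_apply, smul_eq_mul, mul_assoc]

lemma prod {ι : Type*} {s : Finset ι} {f : ι → ℝ → ℝ → ℝ} {deg : ι → ℕ}
    (hf : ∀ i ∈ s, HasNonnegBaryExpansion (deg i) (f i)) :
    HasNonnegBaryExpansion (∑ i ∈ s, deg i) (∏ i ∈ s, f i) := by
  classical
  induction s using Finset.induction_on with
  | empty => exact one
  | insert i s hi ih =>
    rw [sum_insert hi, prod_insert hi, add_comm]
    exact (hf i (mem_insert_self i s)).mul (ih fun j hj => hf j (mem_insert_of_mem hj))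

lemma linear {a b c : ℝ} (ha : 0 ≤ a) (hb : 0 ≤ b) (hc : 0 ≤ c) :
    HasNonnegBaryExpansion 1 (fun u v => a * u + b * v + c * (1 - u - v)) := by
  have hu := (monomial (m := 1) (1, 0, 0) (by decide)).smul ha
  have hv := (monomial (m := 1) (0, 1, 0) (by decide)).smul hb
  have hw := (monomial (m := 1) (0, 0, 1) (by decide)).smul hc
  convert (hu.add hv).add hw using 1
  ext u v
  simp [baryMonomial]

end HasNonnegBaryExpansion

theorem stmt9_general (q : ℝ) (hq0 : 0 < q) (hq1 : q < 1) (r : ℕ) :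
    ∃ c : ℕ × ℕ × ℕ → ℝ, (∀ p ∈ simplex r, 0 ≤ c p) ∧
      ∀ u v : ℝ,
        ∏ s ∈ Finset.range r, (1 - q ^ s * u - q ^ s * v) =
          ∑ p ∈ simplex r, c p * u ^ p.1 * v ^ p.2.1 * (1 - u - v) ^ p.2.2 := by
  have hfactor : ∀ s ∈ range r,
      HasNonnegBaryExpansion 1 (fun u v => 1 - q ^ s * u - q ^ s * v) := by
    intro s _
    have hqs : 0 ≤ 1 - q ^ s := sub_nonneg.2 (pow_le_one₀ hq0.le hq1.le)
    convert HasNonnegBaryExpansion.linear hqs hqs zero_le_one using 1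
    ext u v
    ring
  obtain ⟨c, hc, hprod⟩ := HasNonnegBaryExpansion.prod hfactor
  simp only [sum_const, card_range, smul_eq_mul, mul_one] at hc hprod
  refine ⟨c, hc, fun u v => ?_⟩
  simpa only [Finset.prod_apply, baryMonomial, mul_assoc] using hprod u v

/-- the product ∏ (1 - q^s u - q^s v) has a nonnegative expansion in the
    classical barycentric monomials u^i v^j (1-u-v)^k with i + j + k = r. -/
theorem stmt9 (q : ℝ) (hq0 : 0 < q) (hq1 : q < 1) (r : ℕ) (hr : 1 ≤ r) :
    ∃ c : ℕ × ℕ × ℕ → ℝ, (∀ p ∈ simplex r, 0 ≤ c p) ∧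
      ∀ u v : ℝ,
        ∏ s ∈ Finset.range r, (1 - q ^ s * u - q ^ s * v) =
          ∑ p ∈ simplex r, c p * u ^ p.1 * v ^ p.2.1 * (1 - u - v) ^ p.2.2 :=
  stmt9_general q hq0 hq1 r
end
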